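/- arXiv:math/0310310 — 2 statements merged into one kernel-verified Lean document; each statement's English description precedes it below -/
import Mathlib

section
/- δ(1_{({1,2})} * 1_{({1,2})}) = 0, whereas δ(1_{({1,2})}) *₂ δ(1_{({1,2})}) = 2·1_{({1,2})} ⊗ 1_{({1,2})} + 1_{({1},{2})} ⊗ 1_{({2},{1})} + 1_{({2},{1})} ⊗ 1_{({1},{2})} ≠ 0. In particular δ is not an algebra morphism for the convolution product *, so (𝒯, *, δ) is not a bialgebra. -/
/-!
Twisted descent algebras and the Solomon-Tits algebra (Patras-Schocker).

* A *packed sequence* is a finite sequence of pairwise disjoint nonempty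
  finite subsets of ℕ.
* `TD k` is the free twisted descent algebra `𝒯`: the free `k`-module with
  basis `1_w`, `w` a packed sequence.
* `convL` is the convolution product `∗`, `compL` the composition product `∘`,
  `deltaL` the coproduct `δ`.
* `TD k` also realizes the free twisted bialgebra `ℬ` (whose basis words
  `α_{S_1}⋯α_{S_k}` are exactly the packed sequences); `Tmap u` realizes the
  convolution `1_{U_1} ∗ ⋯ ∗ 1_{U_l}` of characteristic maps as an
  endomorphism of `ℬ`; `BS k S` is the graded piece `ℬ_S` with concatenation
  `mulInto` and deconcatenation `deltaInto`.
-/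

open scoped TensorProduct

noncomputable section
namespace TwistedDescent

/-- A sequence of finite subsets of `ℕ`. -/
abbrev PSeq : Type := List (Finset ℕ)

/-- A packed sequence: a finite sequence of pairwise disjoint nonempty finite
subsets of `ℕ`. -/
def Packed (w : PSeq) : Prop :=
  w.Pairwise (fun S T => Disjoint S T) ∧ ∀ S ∈ w, S ≠ ∅

instance : DecidablePred Packed := fun w => by unfold Packed; infer_instance

/-- The type of packed sequences. -/
abbrev PackedSeq : Type := {w : PSeq // Packed w}

/-- The free twisted descent algebra `𝒯`: the free `k`-module with basis the
packed sequences.  (The same module realizes the free twisted bialgebra `ℬ`,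
whose basis words are the packed sequences.) -/
abbrev TD (k : Type) [CommRing k] : Type := PackedSeq →₀ k

variable (k : Type) [CommRing k]

/-- The basis element `1_l` of `𝒯` if `l` is packed, and `0` otherwise. -/
def mk (l : PSeq) : TD k := if h : Packed l then Finsupp.single ⟨l, h⟩ 1 else 0

/-- The union `S_1 ∪ ⋯ ∪ S_k` of the members of a sequence of sets. -/
def unionOf (w : PSeq) : Finset ℕ := w.foldr (· ∪ ·) ∅

/-- The convolution product `∗` on `𝒯`, as a bilinear map:
`1_{(S_1,…,S_n)} ∗ 1_{(T_1,…,T_m)} = 1_{(S_1,…,S_n,T_1,…,T_m)}` if all the sets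
are pairwise disjoint, and `0` otherwise. -/
def convL : TD k →ₗ[k] TD k →ₗ[k] TD k :=
  Finsupp.lsum k fun w => LinearMap.toSpanSingleton k _ <|
    Finsupp.lsum k fun v => LinearMap.toSpanSingleton k _ (mk k (w.1 ++ v.1))

/-- The refinement `(S_1∩T_1,…,S_1∩T_k,…,S_n∩T_1,…,S_n∩T_k)` of two sequences,
with all empty intersections deleted. -/
def refines (w v : PSeq) : PSeq :=
  w.flatMap fun S => (v.map fun U => S ∩ U).filter fun U => U ≠ ∅

/-- The composition product on basis elements: `0` if the underlying sets
differ, and the refinement otherwise. -/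
def compB (w v : PSeq) : TD k :=
  if unionOf w = unionOf v then mk k (refines w v) else 0

/-- The composition product `∘` on `𝒯`, as a bilinear map. -/
def compL : TD k →ₗ[k] TD k →ₗ[k] TD k :=
  Finsupp.lsum k fun w => LinearMap.toSpanSingleton k _ <|
    Finsupp.lsum k fun v => LinearMap.toSpanSingleton k _ (compB k w.1 v.1)

instance : Zero (TD k ⊗[k] TD k) :=
  (inferInstance : AddZeroClass (TD k ⊗[k] TD k)).toZero

/-- All ways of splitting each block `S_i` of `w` into an ordered pair
`(T_i, U_i)` with `S_i = T_i ⊔ U_i`. -/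
def splittings (w : PSeq) : List (List (Finset ℕ × Finset ℕ)) :=
  (w.map fun S => S.powerset.toList.map fun U => (U, S \ U)).sections

/-- Delete all empty sets from a sequence. -/
def strip (l : PSeq) : PSeq := l.filter fun S => S ≠ ∅

/-- The coproduct on a basis element:
`δ(1_{(S_1,…,S_k)}) = Σ 1_{(T_1,…,T_k)^} ⊗ 1_{(U_1,…,U_k)^}` summed over all
ways of writing `S_i = T_i ⊔ U_i`, where `^` deletes empty sets. -/
def deltaB (w : PackedSeq) : TD k ⊗[k] TD k :=
  ((splittings w.1).map fun p =>
    (mk k (strip (p.map Prod.fst)) ⊗ₜ[k] mk k (strip (p.map Prod.snd)) :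
      TD k ⊗[k] TD k)).sum

/-- The coproduct `δ : 𝒯 → 𝒯 ⊗ 𝒯`. -/
def deltaL : TD k →ₗ[k] TD k ⊗[k] TD k :=
  Finsupp.lsum k fun w => LinearMap.toSpanSingleton k _ (deltaB k w)

/-- The componentwise convolution `∗₂` on `𝒯 ⊗ 𝒯`:
`(a⊗b) ∗₂ (c⊗d) = (a∗c)⊗(b∗d)`. -/
def conv2 : TD k ⊗[k] TD k →ₗ[k] TD k ⊗[k] TD k →ₗ[k] TD k ⊗[k] TD k :=
  (TensorProduct.homTensorHomMap (RingHom.id k) _ _ _ _).comp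
    (TensorProduct.map (convL k) (convL k))

/-- The componentwise composition `∘₂` on `𝒯 ⊗ 𝒯`:
`(a⊗b) ∘₂ (c⊗d) = (a∘c)⊗(b∘d)`. -/
def comp2 : TD k ⊗[k] TD k →ₗ[k] TD k ⊗[k] TD k →ₗ[k] TD k ⊗[k] TD k :=
  (TensorProduct.homTensorHomMap (RingHom.id k) _ _ _ _).comp
    (TensorProduct.map (compL k) (compL k))

/-- The linear map `μ : 𝒯 ⊗ 𝒯 → 𝒯` induced by the convolution product. -/
def muL : TD k ⊗[k] TD k →ₗ[k] TD k := TensorProduct.lift (convL k)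

/-- The submodule `𝒯_S` of `𝒯` spanned by the basis elements `1_w` with `w` an
ordered partition of `S`. -/
def TS (S : Finset ℕ) : Submodule k (TD k) :=
  Submodule.span k {x | ∃ w : PackedSeq, unionOf w.1 = S ∧ x = Finsupp.single w 1}

/-- The blocks of `w` contained in `U_1`, in their original relative order,
then those contained in `U_2`, and so on. -/
def reorder (u w : PSeq) : PSeq := u.flatMap fun U => w.filter fun S => S ⊆ U

/-- Action of `T_u = 1_{U_1} ∗ ⋯ ∗ 1_{U_l}` on a basis word of `ℬ`: the word is
killed unless it has degree `∪ U_j` and each of its blocks is contained in some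
`U_j`, in which case the blocks are regrouped along `u`. -/
def TmapB (u : PSeq) (w : PackedSeq) : TD k :=
  if unionOf w.1 = unionOf u ∧ ∀ S ∈ w.1, ∃ U ∈ u, S ⊆ U then mk k (reorder u w.1)
  else 0

/-- The endomorphism `T_u = 1_{U_1} ∗ ⋯ ∗ 1_{U_l}` of the free twisted
bialgebra `ℬ`. -/
def Tmap (u : PSeq) : Module.End k (TD k) :=
  Finsupp.lsum k fun w => LinearMap.toSpanSingleton k _ (TmapB k u w)

/-- Ordered partitions of the finite set `S`. -/
def OrdPart (S : Finset ℕ) : Type := {w : PSeq // Packed w ∧ unionOf w = S}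

/-- The graded component `ℬ_S`: the free `k`-module on the ordered partitions
of `S`. -/
abbrev BS (S : Finset ℕ) : Type := OrdPart S →₀ k

/-- Basis element of `ℬ_S`, or `0` if `l` is not an ordered partition of `S`. -/
def mkS (S : Finset ℕ) (l : PSeq) : BS k S :=
  if h : Packed l ∧ unionOf l = S then Finsupp.single ⟨l, h⟩ 1 else 0

instance (S S' : Finset ℕ) : Zero (BS k S ⊗[k] BS k S') :=
  (inferInstance : AddZeroClass (BS k S ⊗[k] BS k S')).toZero

/-- Concatenation `m_{U,V} : ℬ_U ⊗ ℬ_V → ℬ_S` (nonzero only when `U ⊔ V = S`),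
as a bilinear map. -/
def mulInto (U V S : Finset ℕ) : BS k U →ₗ[k] BS k V →ₗ[k] BS k S :=
  Finsupp.lsum k fun w => LinearMap.toSpanSingleton k _ <|
    Finsupp.lsum k fun v => LinearMap.toSpanSingleton k _ (mkS k S (w.1 ++ v.1))

/-- Deconcatenation `δ_{U,V} : ℬ_S → ℬ_U ⊗ ℬ_V` (intended for `S = U ⊔ V`):
a basis word goes to `w_U ⊗ w_V` if each of its blocks is contained in `U` or
in `V`, where `w_U` (resp. `w_V`) is the subsequence of blocks contained in `U`
(resp. `V`), and to `0` otherwise. -/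
def deltaInto (S U V : Finset ℕ) : BS k S →ₗ[k] BS k U ⊗[k] BS k V :=
  Finsupp.lsum k fun w => LinearMap.toSpanSingleton k _ <|
    if ∀ B ∈ w.1, B ⊆ U ∨ B ⊆ V then
      mkS k U (w.1.filter fun B => B ⊆ U) ⊗ₜ[k] mkS k V (w.1.filter fun B => B ⊆ V)
    else 0

/-- Graded endomorphisms of `ℬ`: families `(f_S)_S` of endomorphisms of the
graded components `ℬ_S`. -/
abbrev GEnd : Type := (S : Finset ℕ) → Module.End k (BS k S)

/-- The convolution of graded endomorphisms:
`(f∗g)_S = Σ_{U ⊔ V = S} m_{U,V} ∘ (f_U ⊗ g_V) ∘ δ_{U,V}`. -/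
def gconv (f g : GEnd k) : GEnd k := fun S =>
  ∑ U ∈ S.powerset,
    (TensorProduct.lift (mulInto k U (S \ U) S)).comp
      ((TensorProduct.map (f U) (g (S \ U))).comp (deltaInto k S U (S \ U)))

/-- The characteristic map `1_∅`: the identity on `ℬ_∅` and `0` on `ℬ_S` for
`S ≠ ∅`. -/
def gone : GEnd k := fun S => if S = ∅ then LinearMap.id else 0

/-- `1_C(S)`: the sum of all `1_w`, `w` an ordered partition of `S` of
type `C`. -/
def oneC (C : List ℕ) (S : Finset ℕ) : TD k :=
  ∑ᶠ w : PackedSeq,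
    if unionOf w.1 = S ∧ w.1.map Finset.card = C then Finsupp.single w (1 : k) else 0

/-- The composition obtained by reading a matrix of nonnegative integers row by
row and deleting all zero entries. -/
def matComp {r c : ℕ} (a : Fin r → Fin c → ℕ) : List ℕ :=
  (List.finRange r).flatMap fun i =>
    ((List.finRange c).map fun j => a i j).filter fun m => m ≠ 0

/-- `σ` is a permutation of `[n] = {1,…,n}`: it fixes everything outside
`{1,…,n}` (and hence permutes `{1,…,n}`). -/
def IsPermOn (n : ℕ) (σ : Equiv.Perm ℕ) : Prop := ∀ m ∉ Finset.Icc 1 n, σ m = m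

/-- The sequence `({σ(1)},…,{σ(n)})` of singletons, written `1_σ` in `𝒯`. -/
def permList (n : ℕ) (σ : Equiv.Perm ℕ) : PSeq :=
  (List.range n).map fun i => {σ (i + 1)}

/-- An ordered partition `(S_1,…,S_k)` is increasing if `s < s'` whenever
`s ∈ S_i`, `s' ∈ S_j` and `i < j`. -/
def Increasing (w : PSeq) : Prop := w.Pairwise fun S T => ∀ s ∈ S, ∀ t ∈ T, s < t

/-- `σ` is a shuffle of `(S_1,…,S_k)`: the elements of each `S_i` occur in
increasing order in the sequence `(σ(1),…,σ(n))`. -/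
def IsShuffle (n : ℕ) (w : PSeq) (σ : Equiv.Perm ℕ) : Prop :=
  ∀ S ∈ w, ∀ i j : ℕ, 1 ≤ i → i < j → j ≤ n → σ i ∈ S → σ j ∈ S → σ i < σ j

/-- The descent set `D(τ) = {i | 1 ≤ i ≤ n-1, τ(i) > τ(i+1)}` of a permutation
of `[n]`. -/
def Des (n : ℕ) (τ : Equiv.Perm ℕ) : Set ℕ := {i | 1 ≤ i ∧ i < n ∧ τ (i + 1) < τ i}

/-- The right action of a permutation `σ`:
`1_{(S_1,…,S_k)}·σ = 1_{(σ⁻¹(S_1),…,σ⁻¹(S_k))}`, extended linearly. -/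
def actL (σ : Equiv.Perm ℕ) : TD k →ₗ[k] TD k :=
  Finsupp.lsum k fun w =>
    LinearMap.toSpanSingleton k _ (mk k (w.1.map fun S => S.image ⇑σ⁻¹))

-- auxiliary lemmas
lemma mk_packed (l : PSeq) (h : Packed l) : mk k l = Finsupp.single ⟨l, h⟩ 1 := dif_pos h
lemma mk_not (l : PSeq) (h : ¬ Packed l) : mk k l = 0 := dif_neg h

lemma packed_append_left {l l' : PSeq} (h : Packed (l ++ l')) : Packed l :=
  ⟨h.1.sublist (l.sublist_append_left l'), fun S hS => h.2 S (List.mem_append_left _ hS)⟩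
lemma packed_append_right {l l' : PSeq} (h : Packed (l ++ l')) : Packed l' :=
  ⟨h.1.sublist (l.sublist_append_right l'), fun S hS => h.2 S (List.mem_append_right _ hS)⟩

lemma convL_mk (l l' : PSeq) : convL k (mk k l) (mk k l') = mk k (l ++ l') := by
  by_cases h : Packed l
  · by_cases h' : Packed l'
    · rw [mk_packed k l h, mk_packed k l' h']
      simp [convL, Finsupp.lsum_single, LinearMap.toSpanSingleton_apply]
    · rw [mk_not k l' h', mk_not k _ (fun hh => h' (packed_append_right hh)), map_zero]
  · rw [mk_not k l h, mk_not k _ (fun hh => h (packed_append_left hh)), map_zero,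
      LinearMap.zero_apply]

lemma deltaL_mk (l : PSeq) (h : Packed l) : deltaL k (mk k l) = deltaB k ⟨l, h⟩ := by
  rw [mk_packed k l h]
  simp [deltaL, Finsupp.lsum_single, LinearMap.toSpanSingleton_apply]

lemma splittings_single (S : Finset ℕ) :
    splittings [S] = S.powerset.toList.map fun U => [(U, S \ U)] := by
  simp [splittings, List.sections]

lemma sum_toList_map {X M : Type*} [AddCommMonoid M] (s : Finset X) (g : X → M) :
    (s.toList.map g).sum = ∑ x ∈ s, g x := by
  rw [← Multiset.sum_coe, ← Multiset.map_coe, Finset.toList, Multiset.coe_toList]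
  rfl

lemma deltaB_single (S : Finset ℕ) (h : Packed [S]) :
    deltaB k ⟨[S], h⟩ = ∑ U ∈ S.powerset, mk k (strip [U]) ⊗ₜ[k] mk k (strip [S \ U]) := by
  rw [deltaB, splittings_single, List.map_map, ← sum_toList_map]
  rfl

lemma deltaB_12 (h : Packed [({1,2} : Finset ℕ)]) :
    deltaB k ⟨[({1,2} : Finset ℕ)], h⟩
      = mk k [] ⊗ₜ[k] mk k [{1,2}] + mk k [{1}] ⊗ₜ[k] mk k [{2}]
        + mk k [{2}] ⊗ₜ[k] mk k [{1}] + mk k [{1,2}] ⊗ₜ[k] mk k [] := by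
  rw [deltaB_single, show ({1,2} : Finset ℕ).powerset = {∅, {1}, {2}, {1,2}} from by decide]
  rw [Finset.sum_insert (by decide), Finset.sum_insert (by decide),
    Finset.sum_insert (by decide), Finset.sum_singleton]
  rw [show ({1,2} : Finset ℕ) \ ∅ = {1,2} from by decide,
    show ({1,2} : Finset ℕ) \ {1} = {2} from by decide,
    show ({1,2} : Finset ℕ) \ {2} = {1} from by decide,
    show ({1,2} : Finset ℕ) \ {1,2} = ∅ from by decide,
    show strip [({1,2} : Finset ℕ)] = [{1,2}] from by decide,
    show strip [({1} : Finset ℕ)] = [{1}] from by decide,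
    show strip [({2} : Finset ℕ)] = [{2}] from by decide,
    show strip [(∅ : Finset ℕ)] = [] from by decide]
  abel

lemma conv2_tmul (a b c d : TD k) :
    conv2 k (a ⊗ₜ[k] b) (c ⊗ₜ[k] d) = convL k a c ⊗ₜ[k] convL k b d := by
  simp [conv2, TensorProduct.homTensorHomMap_apply, TensorProduct.map_tmul]

lemma conv2_delta_12 :
    conv2 k (deltaL k (mk k [{1, 2}])) (deltaL k (mk k [{1, 2}]))
      = 2 • (mk k [{1, 2}] ⊗ₜ[k] mk k [{1, 2}])
        + mk k [{1}, {2}] ⊗ₜ[k] mk k [{2}, {1}]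
        + mk k [{2}, {1}] ⊗ₜ[k] mk k [{1}, {2}] := by
  have hP : Packed [({1,2} : Finset ℕ)] := by decide
  rw [deltaL_mk k _ hP, deltaB_12]
  simp only [map_add, LinearMap.add_apply, conv2_tmul, convL_mk, List.nil_append,
    List.cons_append, List.append_nil]
  rw [mk_not k [{1,2},{1,2}] (by decide), mk_not k [{1,2},{2}] (by decide),
    mk_not k [{1,2},{1}] (by decide), mk_not k [{2},{1,2}] (by decide),
    mk_not k [{1},{1}] (by decide), mk_not k [{1},{1,2}] (by decide),
    mk_not k [{2},{2}] (by decide)]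
  simp only [TensorProduct.tmul_zero, TensorProduct.zero_tmul, add_zero, zero_add]
  abel


/-- `δ(1_{({1,2})} ∗ 1_{({1,2})}) = 0` while
`δ(1_{({1,2})}) ∗₂ δ(1_{({1,2})})
  = 2·1_{({1,2})}⊗1_{({1,2})} + 1_{({1},{2})}⊗1_{({2},{1})}
    + 1_{({2},{1})}⊗1_{({1},{2})} ≠ 0`;
in particular `δ` is not an algebra morphism for `∗`, so `(𝒯, ∗, δ)` is not a
bialgebra. -/
theorem delta_not_conv_multiplicative (k : Type) [CommRing k] [Nontrivial k] :
    deltaL k (convL k (mk k [{1, 2}]) (mk k [{1, 2}])) = 0 ∧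
    conv2 k (deltaL k (mk k [{1, 2}])) (deltaL k (mk k [{1, 2}]))
      = 2 • (mk k [{1, 2}] ⊗ₜ[k] mk k [{1, 2}])
        + mk k [{1}, {2}] ⊗ₜ[k] mk k [{2}, {1}]
        + mk k [{2}, {1}] ⊗ₜ[k] mk k [{1}, {2}] ∧
    conv2 k (deltaL k (mk k [{1, 2}])) (deltaL k (mk k [{1, 2}])) ≠ 0 ∧
    ¬ ∀ x y : TD k, deltaL k (convL k x y) = conv2 k (deltaL k x) (deltaL k y) := by
  have h1 : deltaL k (convL k (mk k [{1, 2}]) (mk k [{1, 2}])) = 0 := by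
    rw [convL_mk, mk_not k _ (by decide), map_zero]
  have h2 := conv2_delta_12 k
  have h3 : conv2 k (deltaL k (mk k [{1, 2}])) (deltaL k (mk k [{1, 2}])) ≠ 0 := by
    intro h0
    set wa : PackedSeq := ⟨[{1}, {2}], by decide⟩ with hwa
    set wb : PackedSeq := ⟨[{2}, {1}], by decide⟩ with hwb
    let φ : TD k →ₗ[k] k := Finsupp.lapply wa
    let ψ : TD k →ₗ[k] k := Finsupp.lapply wb
    let F : TD k ⊗[k] TD k →ₗ[k] k :=
      (TensorProduct.lid k k).toLinearMap.comp (TensorProduct.map φ ψ)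
    have hF : F (conv2 k (deltaL k (mk k [{1, 2}])) (deltaL k (mk k [{1, 2}]))) = 1 := by
      rw [h2]
      have e1 : φ (mk k [{1, 2}]) = 0 := by
        rw [mk_packed k _ (by decide)]
        exact Finsupp.single_eq_of_ne' (by decide)
      have e2 : φ (mk k [{1}, {2}]) = 1 := by
        rw [mk_packed k _ (by decide)]
        exact Finsupp.single_eq_same
      have e3 : φ (mk k [{2}, {1}]) = 0 := by
        rw [mk_packed k _ (by decide)]
        exact Finsupp.single_eq_of_ne' (by decide)
      have f1 : ψ (mk k [{1, 2}]) = 0 := by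
        rw [mk_packed k _ (by decide)]
        exact Finsupp.single_eq_of_ne' (by decide)
      have f2 : ψ (mk k [{2}, {1}]) = 1 := by
        rw [mk_packed k _ (by decide)]
        exact Finsupp.single_eq_same
      have f3 : ψ (mk k [{1}, {2}]) = 0 := by
        rw [mk_packed k _ (by decide)]
        exact Finsupp.single_eq_of_ne' (by decide)
      simp [F, TensorProduct.map_tmul, e1, e2, e3, f1, f2, f3]
    rw [h0, map_zero] at hF
    exact zero_ne_one hF
  refine ⟨h1, h2, h3, fun hall => ?_⟩
  have := hall (mk k [{1, 2}]) (mk k [{1, 2}])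
  rw [h1] at this
  exact h3 this.symm


end TwistedDescent
end
end

section
/- For all f, g, h ∈ 𝒯, (f * g) ∘ h = μ((f ⊗ g) ∘₂ δ(h)); in Sweedler notation, writing δ(h) = Σ h^{(1)} ⊗ h^{(2)}, this reads (f*g)∘h = Σ (f∘h^{(1)}) * (g∘h^{(2)}) (the reciprocity law linking both products and the coproduct on the free twisted descent algebra). -/
/-!
Twisted descent algebras and the Solomon-Tits algebra (Patras-Schocker).

* A *packed sequence* is a finite sequence of pairwise disjoint nonempty
  finite subsets of ℕ.
* `TD k` is the free twisted descent algebra `𝒯`: the free `k`-module with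
  basis `1_w`, `w` a packed sequence.
* `convL` is the convolution product `∗`, `compL` the composition product `∘`,
  `deltaL` the coproduct `δ`.
* `TD k` also realizes the free twisted bialgebra `ℬ` (whose basis words
  `α_{S_1}⋯α_{S_k}` are exactly the packed sequences); `Tmap u` realizes the
  convolution `1_{U_1} ∗ ⋯ ∗ 1_{U_l}` of characteristic maps as an
  endomorphism of `ℬ`; `BS k S` is the graded piece `ℬ_S` with concatenation
  `mulInto` and deconcatenation `deltaInto`.
-/

open scoped TensorProduct

noncomputable section
namespace TwistedDescent

variable (k : Type) [CommRing k]

/-! ### Auxiliary lemmas for the reciprocity law -/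

section ReciprocityAux

variable {k : Type} [CommRing k]

lemma convL_single (w v : PackedSeq) :
    convL k (Finsupp.single w (1 : k)) (Finsupp.single v 1) = mk k (w.1 ++ v.1) := by
  simp [convL, Finsupp.lsum_single, LinearMap.toSpanSingleton_apply]

lemma compL_single (w v : PackedSeq) :
    compL k (Finsupp.single w (1 : k)) (Finsupp.single v 1) = compB k w.1 v.1 := by
  simp [compL, Finsupp.lsum_single, LinearMap.toSpanSingleton_apply]

lemma deltaL_single (u : PackedSeq) :
    deltaL k (Finsupp.single u (1 : k)) = deltaB k u := by
  simp [deltaL, Finsupp.lsum_single, LinearMap.toSpanSingleton_apply]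

lemma muL_tmul (a b : TD k) : muL k (a ⊗ₜ[k] b) = convL k a b := by
  simp [muL]

lemma comp2_tmul (a b c d : TD k) :
    comp2 k (a ⊗ₜ[k] b) (c ⊗ₜ[k] d) = compL k a c ⊗ₜ[k] compL k b d := by
  simp [comp2, TensorProduct.homTensorHomMap_apply, TensorProduct.map_tmul]

lemma packed_append {a b : PSeq} :
    Packed (a ++ b) ↔ Packed a ∧ Packed b ∧ ∀ S ∈ a, ∀ T ∈ b, Disjoint S T := by
  unfold Packed
  rw [List.pairwise_append, List.forall_mem_append]
  tauto

lemma compL_single_mk (w : PackedSeq) (l : PSeq) (h : Packed l) :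
    compL k (Finsupp.single w (1 : k)) (mk k l) = compB k w.1 l := by
  rw [mk, dif_pos h]
  exact compL_single w ⟨l, h⟩

lemma compL_mk_single (a : PSeq) (u : PackedSeq) (h : Packed a) :
    compL k (mk k a) (Finsupp.single u (1 : k)) = compB k a u.1 := by
  rw [mk, dif_pos h]
  exact compL_single ⟨a, h⟩ u

lemma convL_mk_mk (a b : PSeq) : convL k (mk k a) (mk k b) = mk k (a ++ b) := by
  by_cases ha : Packed a
  · by_cases hb : Packed b
    · rw [mk, dif_pos ha, mk, dif_pos hb]
      exact convL_single ⟨a, ha⟩ ⟨b, hb⟩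
    · have h1 : mk k b = 0 := dif_neg hb
      have h2 : mk k (a ++ b) = 0 := dif_neg fun hp => hb (packed_append.1 hp).2.1
      rw [h1, h2, map_zero]
  · have h1 : mk k a = 0 := dif_neg ha
    have h2 : mk k (a ++ b) = 0 := dif_neg fun hp => ha (packed_append.1 hp).1
    rw [h1, h2, map_zero, LinearMap.zero_apply]

lemma mem_unionOf {l : PSeq} {x : ℕ} : x ∈ unionOf l ↔ ∃ S ∈ l, x ∈ S := by
  induction l with
  | nil => simp [unionOf]
  | cons a t ih =>
    simp only [unionOf, List.foldr_cons] at ih ⊢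
    rw [Finset.mem_union, ih]
    simp

lemma subset_unionOf {l : PSeq} {S : Finset ℕ} (h : S ∈ l) : S ⊆ unionOf l :=
  fun x hx => mem_unionOf.2 ⟨S, h, hx⟩

lemma unionOf_append (a b : PSeq) : unionOf (a ++ b) = unionOf a ∪ unionOf b := by
  ext x
  simp only [mem_unionOf, Finset.mem_union, List.mem_append]
  constructor
  · rintro ⟨S, hS | hS, hx⟩
    · exact Or.inl ⟨S, hS, hx⟩
    · exact Or.inr ⟨S, hS, hx⟩
  · rintro (⟨S, hS, hx⟩ | ⟨S, hS, hx⟩)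
    · exact ⟨S, Or.inl hS, hx⟩
    · exact ⟨S, Or.inr hS, hx⟩

lemma unionOf_strip (l : PSeq) : unionOf (strip l) = unionOf l := by
  ext x
  simp only [mem_unionOf, strip, List.mem_filter, decide_eq_true_eq]
  constructor
  · rintro ⟨S, ⟨hS, _⟩, hx⟩
    exact ⟨S, hS, hx⟩
  · rintro ⟨S, hS, hx⟩
    exact ⟨S, ⟨hS, Finset.ne_empty_of_mem hx⟩, hx⟩

lemma unionOf_map_inter (l : PSeq) (A : Finset ℕ) :
    unionOf (l.map fun S => S ∩ A) = unionOf l ∩ A := by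
  ext x
  simp only [mem_unionOf, List.mem_map, Finset.mem_inter]
  constructor
  · rintro ⟨S, ⟨T, hT, rfl⟩, hx⟩
    exact ⟨⟨T, hT, (Finset.mem_inter.1 hx).1⟩, (Finset.mem_inter.1 hx).2⟩
  · rintro ⟨⟨T, hT, hxT⟩, hxA⟩
    exact ⟨T ∩ A, ⟨T, hT, rfl⟩, Finset.mem_inter.2 ⟨hxT, hxA⟩⟩

lemma unionOf_map_sdiff (l : PSeq) (A : Finset ℕ) :
    unionOf (l.map fun S => S \ A) = unionOf l \ A := by
  ext x
  simp only [mem_unionOf, List.mem_map, Finset.mem_sdiff]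
  constructor
  · rintro ⟨S, ⟨T, hT, rfl⟩, hx⟩
    exact ⟨⟨T, hT, (Finset.mem_sdiff.1 hx).1⟩, (Finset.mem_sdiff.1 hx).2⟩
  · rintro ⟨⟨T, hT, hxT⟩, hxA⟩
    exact ⟨T \ A, ⟨T, hT, rfl⟩, Finset.mem_sdiff.2 ⟨hxT, hxA⟩⟩

lemma refines_append (a b u : PSeq) :
    refines (a ++ b) u = refines a u ++ refines b u := by
  simp [refines, List.flatMap_append]

lemma filter_map_strip (S : Finset ℕ) (l : PSeq) :
    ((strip l).map fun U => S ∩ U).filter (fun U => U ≠ ∅)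
      = (l.map fun U => S ∩ U).filter (fun U => U ≠ ∅) := by
  induction l with
  | nil => rfl
  | cons U t ih =>
    by_cases hU : U = ∅
    · subst hU
      have h1 : strip ((∅ : Finset ℕ) :: t) = strip t := by simp [strip]
      rw [h1, ih, List.map_cons, List.filter_cons]
      simp [Finset.inter_empty]
    · have h1 : strip (U :: t) = U :: strip t := by simp [strip, hU]
      rw [h1, List.map_cons, List.map_cons, List.filter_cons, List.filter_cons, ih]

lemma refines_strip (w l : PSeq) : refines w (strip l) = refines w l := by
  induction w with
  | nil => rfl
  | cons S t ih =>
    simp only [refines, List.flatMap_cons] at ih ⊢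
    rw [ih, filter_map_strip]

lemma refines_map (w u : PSeq) (f : Finset ℕ → Finset ℕ)
    (h : ∀ S ∈ w, ∀ U ∈ u, S ∩ f U = S ∩ U) :
    refines w (u.map f) = refines w u := by
  induction w with
  | nil => rfl
  | cons S t ih =>
    simp only [refines, List.flatMap_cons] at ih ⊢
    rw [ih fun S' hS' U hU => h S' (List.mem_cons_of_mem _ hS') U hU]
    congr 1
    rw [List.map_map]
    congr 1
    apply List.map_congr_left
    intro U hU
    exact h S List.mem_cons_self U hU

lemma packed_disjoint_get (u : PSeq) (hu : Packed u) {i j : ℕ}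
    (hi : i < u.length) (hj : j < u.length) (hij : i ≠ j) :
    Disjoint u[i] u[j] := by
  rcases Nat.lt_or_ge i j with hlt | hge
  · simpa using List.pairwise_iff_get.1 hu.1 ⟨i, hi⟩ ⟨j, hj⟩ (Fin.mk_lt_mk.2 hlt)
  · have hji : j < i := by omega
    simpa using (List.pairwise_iff_get.1 hu.1 ⟨j, hj⟩ ⟨i, hi⟩ (Fin.mk_lt_mk.2 hji)).symm

lemma packed_strip_of_sub (u : PackedSeq) {l : PSeq} (hlen : l.length = u.1.length)
    (hsub : ∀ i (h1 : i < l.length) (h2 : i < u.1.length), l[i] ⊆ u.1[i]) :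
    Packed (strip l) := by
  constructor
  · apply List.Pairwise.filter
    rw [List.pairwise_iff_get]
    intro i j hij
    simp only [List.get_eq_getElem]
    exact Finset.disjoint_of_subset_left (hsub i.1 i.2 (by omega))
      (Finset.disjoint_of_subset_right (hsub j.1 j.2 (by omega))
        (packed_disjoint_get u.1 u.2 (by omega) (by omega)
          (fun h => ne_of_lt hij (Fin.ext h))))
  · intro S hS
    have := (List.mem_filter.1 hS).2
    simpa using this

lemma mem_splittings {u : PSeq} {p : List (Finset ℕ × Finset ℕ)} (hp : p ∈ splittings u) :
    p.length = u.length ∧ ∀ i (h1 : i < p.length) (h2 : i < u.length),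
      p[i].1 ⊆ u[i] ∧ p[i].2 = u[i] \ p[i].1 := by
  rw [splittings, List.mem_sections, List.forall₂_iff_get] at hp
  obtain ⟨hlen, hget⟩ := hp
  have hlen' : p.length = u.length := by simpa using hlen
  refine ⟨hlen', fun i h1 h2 => ?_⟩
  have hmem := hget i h1 (by simpa using h2)
  simp only [List.get_eq_getElem, List.getElem_map] at hmem
  obtain ⟨T, hT, heq⟩ := List.mem_map.1 hmem
  rw [← heq]
  exact ⟨Finset.mem_powerset.1 (Finset.mem_toList.1 hT), rfl⟩

lemma canonical_mem_splittings (u : PSeq) (A : Finset ℕ) :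
    (u.map fun S => (S ∩ A, S \ A)) ∈ splittings u := by
  rw [splittings, List.mem_sections, List.forall₂_iff_get]
  constructor
  · simp
  · intro i h1 h2
    have hu : i < u.length := by simpa using h2
    simp only [List.get_eq_getElem, List.getElem_map]
    refine List.mem_map.2 ⟨u[i]'hu ∩ A, ?_, ?_⟩
    · exact Finset.mem_toList.2 (Finset.mem_powerset.2 Finset.inter_subset_left)
    · have heq : u[i]'hu \ (u[i]'hu ∩ A) = u[i]'hu \ A := by
        ext x; simp only [Finset.mem_sdiff, Finset.mem_inter]; tauto
      rw [heq]

lemma splitting_forced (u : PackedSeq) {p : List (Finset ℕ × Finset ℕ)}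
    (hp : p ∈ splittings u.1) {A : Finset ℕ}
    (hA : unionOf (p.map Prod.fst) = A) :
    p = u.1.map fun S => (S ∩ A, S \ A) := by
  obtain ⟨hlen, hget⟩ := mem_splittings hp
  apply List.ext_get (by simp [hlen])
  intro n h1 h2
  have hu : n < u.1.length := by simpa using h2
  simp only [List.get_eq_getElem, List.getElem_map]
  obtain ⟨hsub, hsnd⟩ := hget n h1 hu
  have hfst : p[n].1 = u.1[n] ∩ A := by
    apply Finset.Subset.antisymm
    · apply Finset.subset_inter hsub
      rw [← hA]
      apply subset_unionOf
      exact List.mem_map.2 ⟨p[n], List.getElem_mem _, rfl⟩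
    · intro x hx
      obtain ⟨hxu, hxA⟩ := Finset.mem_inter.1 hx
      rw [← hA] at hxA
      obtain ⟨T, hT, hxT⟩ := mem_unionOf.1 hxA
      obtain ⟨pr, hpr, rfl⟩ := List.mem_map.1 hT
      obtain ⟨j, hj, rfl⟩ := List.mem_iff_getElem.1 hpr
      by_cases hnj : n = j
      · subst hnj; exact hxT
      · exfalso
        have hdisj := packed_disjoint_get u.1 u.2 hu (by omega) hnj
        exact Finset.disjoint_left.1 hdisj hxu ((hget j hj (by omega)).1 hxT)
  refine Prod.ext hfst ?_
  rw [hsnd, hfst]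
  ext x; simp only [Finset.mem_sdiff, Finset.mem_inter]; tauto

lemma sections_nodup {α : Type} {L : List (List α)} (h : ∀ l ∈ L, l.Nodup) :
    L.sections.Nodup := by
  induction L with
  | nil => simp [List.sections]
  | cons l L ih =>
    have hcons : (l :: L).sections = L.sections.flatMap fun s => l.map fun a => a :: s := by
      simp [List.sections]
    rw [hcons, List.nodup_flatMap]
    refine ⟨fun s _ => ?_, ?_⟩
    · exact List.Nodup.map (fun a b hab => by injection hab) (h l (by simp))
    · have hnd := ih fun l' hl' => h l' (by simp [hl'])
      refine hnd.imp ?_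
      intro s t hst
      intro x hxs hxt
      obtain ⟨a, _, rfl⟩ := List.mem_map.1 hxs
      obtain ⟨b, _, hb⟩ := List.mem_map.1 hxt
      exact hst (by injection hb.symm)

lemma nodup_splittings (u : PSeq) : (splittings u).Nodup := by
  apply sections_nodup
  intro l hl
  obtain ⟨S, _, rfl⟩ := List.mem_map.1 hl
  exact List.Nodup.map (fun T T' hTT => congrArg Prod.fst hTT) (Finset.nodup_toList _)

lemma list_sum_single {α M : Type*} [AddCommMonoid M] :
    ∀ {l : List α} {f : α → M} {a : α}, a ∈ l → l.Nodup →
      (∀ b ∈ l, b ≠ a → f b = 0) → (l.map f).sum = f a := by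
  intro l
  induction l with
  | nil => intro f a h; simp at h
  | cons b t ih =>
    intro f a hmem hnd h0
    rcases List.mem_cons.1 hmem with rfl | hat
    · simp only [List.map_cons, List.sum_cons]
      have ht : (t.map f).sum = 0 := by
        apply List.sum_eq_zero
        intro x hx
        obtain ⟨c, hc, rfl⟩ := List.mem_map.1 hx
        exact h0 c (by simp [hc]) fun hca => (List.nodup_cons.1 hnd).1 (hca ▸ hc)
      rw [ht, add_zero]
    · have hba : b ≠ a := fun hba => (List.nodup_cons.1 hnd).1 (hba ▸ hat)
      simp only [List.map_cons, List.sum_cons]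
      rw [h0 b (by simp) hba, zero_add]
      exact ih hat (List.nodup_cons.1 hnd).2 fun c hc => h0 c (by simp [hc])

/-- The summand of the reciprocity right-hand side attached to a splitting. -/
def termF (w v : PackedSeq) (p : List (Finset ℕ × Finset ℕ)) : TD k :=
  convL k (compL k (Finsupp.single w (1 : k)) (mk k (strip (p.map Prod.fst))))
          (compL k (Finsupp.single v (1 : k)) (mk k (strip (p.map Prod.snd))))

lemma lhs_zero_aux (w v u : PackedSeq)
    (h : ¬(unionOf w.1 = unionOf u.1 ∩ unionOf w.1 ∧
           unionOf v.1 = unionOf u.1 \ unionOf w.1)) :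
    compL k (mk k (w.1 ++ v.1)) (Finsupp.single u (1 : k)) = 0 := by
  by_cases hpwv : Packed (w.1 ++ v.1)
  · rw [compL_mk_single _ _ hpwv, compB, if_neg]
    intro hCeq
    have hAB : Disjoint (unionOf w.1) (unionOf v.1) := by
      rw [Finset.disjoint_left]
      intro x hxA hxB
      obtain ⟨S, hS, hxS⟩ := mem_unionOf.1 hxA
      obtain ⟨T, hT, hxT⟩ := mem_unionOf.1 hxB
      exact Finset.disjoint_left.1 ((packed_append.1 hpwv).2.2 S hS T hT) hxS hxT
    have hunion : unionOf w.1 ∪ unionOf v.1 = unionOf u.1 := by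
      rw [← unionOf_append]; exact hCeq
    refine h ⟨?_, ?_⟩
    · rw [← hunion, Finset.union_inter_cancel_left]
    · rw [← hunion, Finset.union_sdiff_cancel_left hAB]
  · rw [show mk k (w.1 ++ v.1) = 0 from dif_neg hpwv, map_zero, LinearMap.zero_apply]

lemma reciprocity_single (w v u : PackedSeq) :
    compL k (convL k (Finsupp.single w (1 : k)) (Finsupp.single v 1)) (Finsupp.single u 1)
      = muL k (comp2 k (Finsupp.single w (1 : k) ⊗ₜ[k] Finsupp.single v 1)
          (deltaL k (Finsupp.single u 1))) := by
  classical
  -- Step 1: the right-hand side is the sum of the `termF` over all splittings.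
  have hRHS : muL k (comp2 k (Finsupp.single w (1 : k) ⊗ₜ[k] Finsupp.single v 1)
      (deltaL k (Finsupp.single u 1)))
      = ((splittings u.1).map (termF w v)).sum := by
    rw [deltaL_single]
    simp only [deltaB]
    rw [map_list_sum, map_list_sum, List.map_map, List.map_map]
    congr 1
  rw [hRHS]
  -- Step 2: only the canonical splitting contributes.
  have hsum : ((splittings u.1).map (termF w v)).sum
      = (termF w v (u.1.map fun S => (S ∩ unionOf w.1, S \ unionOf w.1)) : TD k) := by
    apply list_sum_single (canonical_mem_splittings u.1 (unionOf w.1)) (nodup_splittings u.1)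
    intro p hp hne
    by_cases hU : unionOf (p.map Prod.fst) = unionOf w.1
    · exact absurd (splitting_forced u hp hU) hne
    · obtain ⟨hlen, hget⟩ := mem_splittings hp
      have hpack : Packed (strip (p.map Prod.fst)) := by
        apply packed_strip_of_sub u (by simp [hlen])
        intro i h1 h2
        simp only [List.getElem_map]
        exact (hget i (by simpa using h1) h2).1
      simp only [termF]
      rw [compL_single_mk _ _ hpack, compB, if_neg, map_zero, LinearMap.zero_apply]
      rw [unionOf_strip]
      exact fun hh => hU hh.symm
  rw [hsum]
  -- Step 3: evaluate both sides.
  rw [convL_single]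
  have hfst : ((u.1.map fun S => (S ∩ unionOf w.1, S \ unionOf w.1)).map Prod.fst)
      = u.1.map fun S => S ∩ unionOf w.1 := by
    rw [List.map_map]; rfl
  have hsnd : ((u.1.map fun S => (S ∩ unionOf w.1, S \ unionOf w.1)).map Prod.snd)
      = u.1.map fun S => S \ unionOf w.1 := by
    rw [List.map_map]; rfl
  simp only [termF]
  rw [hfst, hsnd]
  have hpT : Packed (strip (u.1.map fun S => S ∩ unionOf w.1)) := by
    apply packed_strip_of_sub u (by simp)
    intro i h1 h2
    simp only [List.getElem_map]
    exact Finset.inter_subset_left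
  have hpU : Packed (strip (u.1.map fun S => S \ unionOf w.1)) := by
    apply packed_strip_of_sub u (by simp)
    intro i h1 h2
    simp only [List.getElem_map]
    exact Finset.sdiff_subset
  rw [compL_single_mk _ _ hpT, compL_single_mk _ _ hpU, compB, compB,
    unionOf_strip, unionOf_strip, unionOf_map_inter, unionOf_map_sdiff]
  by_cases h1 : unionOf w.1 = unionOf u.1 ∩ unionOf w.1
  · by_cases h2 : unionOf v.1 = unionOf u.1 \ unionOf w.1
    · rw [if_pos h1, if_pos h2]
      have hr1 : refines w.1 (strip (u.1.map fun S => S ∩ unionOf w.1))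
          = refines w.1 u.1 := by
        rw [refines_strip]
        apply refines_map
        intro S hS U hU
        have hSA : S ⊆ unionOf w.1 := subset_unionOf hS
        ext x
        simp only [Finset.mem_inter]
        constructor
        · rintro ⟨hxS, hxU, _⟩; exact ⟨hxS, hxU⟩
        · rintro ⟨hxS, hxU⟩; exact ⟨hxS, hxU, hSA hxS⟩
      have hr2 : refines v.1 (strip (u.1.map fun S => S \ unionOf w.1))
          = refines v.1 u.1 := by
        rw [refines_strip]
        apply refines_map
        intro S hS U hU
        have hSB : S ⊆ unionOf v.1 := subset_unionOf hS
        ext x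
        simp only [Finset.mem_inter, Finset.mem_sdiff]
        constructor
        · rintro ⟨hxS, hxU, _⟩; exact ⟨hxS, hxU⟩
        · rintro ⟨hxS, hxU⟩
          refine ⟨hxS, hxU, fun hxA => ?_⟩
          have := hSB hxS
          rw [h2] at this
          exact (Finset.mem_sdiff.1 this).2 hxA
      rw [hr1, hr2, convL_mk_mk]
      have hpwv : Packed (w.1 ++ v.1) := by
        rw [packed_append]
        refine ⟨w.2, v.2, ?_⟩
        intro S hS T hT
        rw [Finset.disjoint_left]
        intro x hxS hxT
        have hxA : x ∈ unionOf w.1 := subset_unionOf hS hxS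
        have hxB : x ∈ unionOf v.1 := subset_unionOf hT hxT
        rw [h2] at hxB
        exact (Finset.mem_sdiff.1 hxB).2 hxA
      rw [compL_mk_single _ _ hpwv, compB, if_pos, refines_append]
      rw [unionOf_append]
      conv_lhs => rw [h1, h2]
      exact sup_inf_sdiff _ _
    · rw [if_neg h2, map_zero]
      exact lhs_zero_aux w v u fun hc => h2 hc.2
  · rw [if_neg h1, map_zero, LinearMap.zero_apply]
    exact lhs_zero_aux w v u fun hc => h1 hc.1

end ReciprocityAux

/-- The reciprocity law on the free twisted descent
algebra: for all `f, g, h ∈ 𝒯`, `(f ∗ g) ∘ h = μ((f ⊗ g) ∘₂ δ(h))`, i.e. in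
Sweedler notation `(f∗g)∘h = Σ (f∘h⁽¹⁾) ∗ (g∘h⁽²⁾)`. -/
theorem reciprocity (k : Type) [CommRing k] (f g h : TD k) :
    compL k (convL k f g) h = muL k (comp2 k (f ⊗ₜ[k] g) (deltaL k h)) := by
  induction h using Finsupp.induction_linear with
  | zero => simp
  | add h1 h2 ih1 ih2 => simp only [map_add, ih1, ih2]
  | single u c =>
    induction f using Finsupp.induction_linear with
    | zero => simp
    | add f1 f2 ih1 ih2 =>
      simp only [map_add, LinearMap.add_apply, TensorProduct.add_tmul, ih1, ih2]
    | single w c' =>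
      induction g using Finsupp.induction_linear with
      | zero => simp
      | add g1 g2 ih1 ih2 =>
        simp only [map_add, LinearMap.add_apply, TensorProduct.tmul_add, ih1, ih2]
      | single v c'' =>
        rw [show (Finsupp.single u c : TD k) = c • Finsupp.single u 1 by
              rw [Finsupp.smul_single', mul_one],
            show (Finsupp.single w c' : TD k) = c' • Finsupp.single w 1 by
              rw [Finsupp.smul_single', mul_one],
            show (Finsupp.single v c'' : TD k) = c'' • Finsupp.single v 1 by
              rw [Finsupp.smul_single', mul_one]]
        simp only [map_smul, LinearMap.smul_apply, TensorProduct.smul_tmul',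
          TensorProduct.tmul_smul, smul_smul, reciprocity_single]
        rw [← TensorProduct.smul_tmul', map_smul, LinearMap.smul_apply, map_smul,
          smul_smul, ← mul_assoc]

end TwistedDescent
end
end
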